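/- The group presented by ⟨t_1, t_2, t_3 | t_i^2 = (t_1 t_2)^3 = (t_2 t_3)^3 = (t_1 t_3)^3 = (t_1 t_2 t_3 t_2)^2 = e⟩ is isomorphic to the symmetric group Sym_4 (the Weyl group of type A_3). -/

import Mathlib

/-!
The subgroup `H = ⟨t₁, t₂⟩` is generated by two involutions whose product has order 3, so it has
at most 6 elements. The extra relation says that `t₃` commutes with `t₂t₁t₂ ∈ H`; with the braid
relations this makes left multiplication by every generator permute the four cosets
`H, t₃H, t₂t₃H, t₁t₃H`, so `[G : H] ≤ 4` and `|G| ≤ 24`. The assignment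
`t₁ ↦ (0 1), t₂ ↦ (1 2), t₃ ↦ (1 3)` respects the relations and reaches every adjacent
transposition (`t₂t₃t₂ ↦ (2 3)`), so it is a surjection onto `Sym₄`, hence an isomorphism.
-/

namespace Stmt2

/-- The relators of the group `⟨t₁,t₂,t₃ ∣ tᵢ² = (t₁t₂)³ = (t₂t₃)³ = (t₁t₃)³ =
(t₁·t₂t₃t₂)² = e⟩`. -/
def rels : Set (FreeGroup (Fin 3)) :=
  let a := FreeGroup.of (0 : Fin 3)
  let b := FreeGroup.of (1 : Fin 3)
  let c := FreeGroup.of (2 : Fin 3)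
  {a ^ 2, b ^ 2, c ^ 2, (a * b) ^ 3, (b * c) ^ 3, (a * c) ^ 3, (a * (b * c * b)) ^ 2}

open Subgroup Pointwise

theorem smul_mem_of_mem_closure {G α : Type*} [Group G] [MulAction G α] {s : Set G}
    {T : Set α} (hT : T.Finite) (hsT : ∀ g ∈ s, g • T ⊆ T) {g : G} (hg : g ∈ closure s)
    {x : α} (hx : x ∈ T) : g • x ∈ T := by
  have hle : closure s ≤ MulAction.stabilizer G T :=
    (closure_le _).2 fun g hg ↦ (MulAction.mem_stabilizer_set_iff_smul_set_subset hT).2 (hsT g hg)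
  rw [← MulAction.mem_stabilizer_iff.1 (hle hg)]
  exact Set.smul_mem_smul_set hx

section Involutions

variable {M : Type*} [Group M] {x y : M}

theorem braid_of_pow_three_eq_one (hx : x * x = 1) (hy : y * y = 1) (h : (x * y) ^ 3 = 1)
    (z : M) : x * (y * (x * z)) = y * (x * (y * z)) := by
  have hx' : x⁻¹ = x := inv_eq_of_mul_eq_one_right hx
  have hy' : y⁻¹ = y := inv_eq_of_mul_eq_one_right hy
  have h' : x * y * x = (y * x * y)⁻¹ :=
    eq_inv_of_mul_eq_one_left (by rw [← h]; simp only [pow_succ, pow_zero, one_mul, mul_assoc])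
  simp only [← mul_assoc, h', mul_inv_rev, hx', hy']

theorem commute_of_sq_eq_one (hx : x * x = 1) (hy : y * y = 1) (h : (x * y) ^ 2 = 1) :
    Commute x y := by
  have hx' : x⁻¹ = x := inv_eq_of_mul_eq_one_right hx
  have hy' : y⁻¹ = y := inv_eq_of_mul_eq_one_right hy
  rw [commute_iff_eq, eq_inv_of_mul_eq_one_left (a := x * y) (b := x * y) (by rw [← h, sq]),
    mul_inv_rev, hx', hy']

end Involutions

-- `t 0`, `t 1`, `t 2` are the generators `t₁`, `t₂`, `t₃`.
def t (i : Fin 3) : PresentedGroup rels := PresentedGroup.of i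

theorem t_mul_self (i : Fin 3) : t i * t i = 1 := by
  rw [← sq]
  exact PresentedGroup.one_of_mem (rels := rels) (x := .of i ^ 2) (by fin_cases i <;> simp [rels])

theorem t_mul_t_mul (i : Fin 3) (x : PresentedGroup rels) : t i * (t i * x) = x := by
  rw [← mul_assoc, t_mul_self, one_mul]

theorem t_braid_01 (x : PresentedGroup rels) : t 0 * (t 1 * (t 0 * x)) = t 1 * (t 0 * (t 1 * x)) :=
  braid_of_pow_three_eq_one (t_mul_self 0) (t_mul_self 1)
    (PresentedGroup.one_of_mem (x := (.of 0 * .of 1) ^ 3) (by simp [rels])) x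

theorem t_braid_12 (x : PresentedGroup rels) : t 1 * (t 2 * (t 1 * x)) = t 2 * (t 1 * (t 2 * x)) :=
  braid_of_pow_three_eq_one (t_mul_self 1) (t_mul_self 2)
    (PresentedGroup.one_of_mem (x := (.of 1 * .of 2) ^ 3) (by simp [rels])) x

theorem t_braid_02 (x : PresentedGroup rels) : t 0 * (t 2 * (t 0 * x)) = t 2 * (t 0 * (t 2 * x)) :=
  braid_of_pow_three_eq_one (t_mul_self 0) (t_mul_self 2)
    (PresentedGroup.one_of_mem (x := (.of 0 * .of 2) ^ 3) (by simp [rels])) x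

-- The extra relation, conjugated by `t₂`.
theorem commute_t2_t1t0t1 : Commute (t 2) (t 1 * t 0 * t 1) := by
  have h : Commute (t 0) (t 1 * t 2 * t 1) := by
    refine commute_of_sq_eq_one (t_mul_self 0) ?_
      (PresentedGroup.one_of_mem (x := (.of 0 * (.of 1 * .of 2 * .of 1)) ^ 2) (by simp [rels]))
    simp only [mul_assoc, t_mul_t_mul, t_mul_self]
  rw [commute_iff_eq]
  simpa only [mul_assoc, t_mul_t_mul, t_mul_self, mul_one, t_braid_01] using
    (congrArg (t 1 * · * t 1) h.eq).symm

def parabolic01 : Subgroup (PresentedGroup rels) := closure {t 0, t 1}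

def dihedralWord : Fin 6 → PresentedGroup rels :=
  ![1, t 0, t 1, t 0 * t 1, t 1 * t 0, t 1 * (t 0 * t 1)]

theorem mem_range_dihedralWord {g : PresentedGroup rels} (hg : g ∈ parabolic01) :
    g ∈ Set.range dihedralWord := by
  have h010 : t 0 * (t 1 * t 0) = t 1 * (t 0 * t 1) := by simpa using t_braid_01 1
  refine mul_one g ▸ smul_mem_of_mem_closure (Set.finite_range _) ?_ hg ⟨0, rfl⟩
  rintro _ (rfl | rfl) <;> rw [Set.smul_set_subset_iff] <;> rintro _ ⟨k, rfl⟩ <;> fin_cases k <;>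
    simp [dihedralWord, t_mul_t_mul, t_mul_self, t_braid_01, h010]

def coset : Fin 4 → PresentedGroup rels ⧸ parabolic01 :=
  ![((1 : PresentedGroup rels) : _ ⧸ parabolic01), ↑(t 2), ↑(t 1 * t 2), ↑(t 0 * t 2)]

theorem t_smul_coset_mem (i : Fin 3) (k : Fin 4) : t i • coset k ∈ Set.range coset := by
  have t0_mem : t 0 ∈ parabolic01 := subset_closure (by simp)
  have t1_mem : t 1 ∈ parabolic01 := subset_closure (by simp)
  have t1t0t1_mem : t 1 * t 0 * t 1 ∈ parabolic01 := mul_mem (mul_mem t1_mem t0_mem) t1_mem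
  have t0_t1t2 : t 0 * (t 1 * t 2) = t 1 * t 2 * (t 1 * t 0 * t 1) := by
    rw [mul_assoc, commute_t2_t1t0t1.eq]
    simp only [mul_assoc, t_mul_t_mul]
  have t1_t0t2 : t 1 * (t 0 * t 2) = t 0 * t 2 * (t 1 * t 0 * t 1) := by
    rw [mul_assoc, commute_t2_t1t0t1.eq]
    simp only [mul_assoc, ← t_braid_01, t_mul_t_mul]
  have t2_t1t2 : t 2 * (t 1 * t 2) = t 1 * t 2 * t 1 := by
    simpa [mul_assoc] using (t_braid_12 1).symm
  have t2_t0t2 : t 2 * (t 0 * t 2) = t 0 * t 2 * t 0 := by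
    simpa [mul_assoc] using (t_braid_02 1).symm
  fin_cases i <;> fin_cases k <;>
    simp [coset, t_mul_t_mul, t_mul_self, t0_t1t2, t1_t0t2, t2_t1t2, t2_t0t2,
      QuotientGroup.mk_mul_of_mem, t0_mem, t1_mem, t1t0t1_mem, QuotientGroup.eq]

theorem coset_surjective : Function.Surjective coset := by
  intro q
  induction q using QuotientGroup.induction_on with | H g => ?_
  have hg : g ∈ closure (Set.range t) := by
    rw [show Set.range t = Set.range PresentedGroup.of from rfl, PresentedGroup.closure_range_of]
    exact mem_top g
  have hsT : ∀ s ∈ Set.range t, s • Set.range coset ⊆ Set.range coset := by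
    rintro _ ⟨i, rfl⟩
    exact Set.smul_set_subset_iff.2 fun _ ⟨k, hk⟩ ↦ hk ▸ t_smul_coset_mem i k
  have hg1 : g • coset 0 = g := by simp [coset]
  exact hg1 ▸ smul_mem_of_mem_closure (Set.finite_range coset) hsT hg ⟨0, rfl⟩

instance : Finite parabolic01 :=
  ((Set.finite_range dihedralWord).subset fun _ ↦ mem_range_dihedralWord).to_subtype

instance : Finite (PresentedGroup rels ⧸ parabolic01) := .of_surjective coset coset_surjective

instance : Finite (PresentedGroup rels) := .of_subgroup_quotient parabolic01

theorem card_presentedGroup_le : Nat.card (PresentedGroup rels) ≤ 24 := by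
  have hH : Nat.card parabolic01 ≤ 6 :=
    (Nat.card_mono (Set.finite_range _) fun _ ↦ mem_range_dihedralWord).trans
      ((Finite.card_range_le _).trans_eq (Nat.card_fin 6))
  have hindex : parabolic01.index ≤ 4 :=
    (Nat.card_le_card_of_surjective coset coset_surjective).trans_eq (Nat.card_fin 4)
  rw [← parabolic01.card_mul_index]
  exact Nat.mul_le_mul hH hindex

def transposition : Fin 3 → Equiv.Perm (Fin 4) := ![.swap 0 1, .swap 1 2, .swap 1 3]

theorem lift_transposition_eq_one : ∀ r ∈ rels, FreeGroup.lift transposition r = 1 := by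
  intro r hr
  simp only [rels, Set.mem_insert_iff, Set.mem_singleton_iff] at hr
  rcases hr with rfl | rfl | rfl | rfl | rfl | rfl | rfl <;>
    simp only [map_pow, map_mul, FreeGroup.lift_apply_of] <;> decide

def toPerm : PresentedGroup rels →* Equiv.Perm (Fin 4) :=
  PresentedGroup.toGroup lift_transposition_eq_one

theorem toPerm_t (i : Fin 3) : toPerm (t i) = transposition i :=
  PresentedGroup.toGroup.of lift_transposition_eq_one

theorem toPerm_surjective : Function.Surjective toPerm := by
  rw [← MonoidHom.mrange_eq_top, eq_top_iff, ← Equiv.Perm.mclosure_swap_castSucc_succ 3,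
    Submonoid.closure_le]
  rintro _ ⟨i, rfl⟩
  fin_cases i
  · exact ⟨t 0, toPerm_t 0⟩
  · exact ⟨t 1, toPerm_t 1⟩
  · exact ⟨t 1 * t 2 * t 1, by simp only [map_mul, toPerm_t]; decide⟩

theorem presentedGroup_iso_sym4 :
    Nonempty (PresentedGroup rels ≃* Equiv.Perm (Fin 4)) := by
  have hcard : Nat.card (PresentedGroup rels) ≤ Nat.card (Equiv.Perm (Fin 4)) := by
    rw [Nat.card_perm, Nat.card_fin]
    exact card_presentedGroup_le
  exact ⟨MulEquiv.ofBijective toPerm (toPerm_surjective.bijective_of_nat_card_le hcard)⟩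

end Stmt2
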